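/- The rank-correlation-based scoring criterion S̃_λ is score equivalent: any two Markov equivalent DAGs (same skeleton and same v-structures) receive the same score S̃_λ for any data (i.e., any symmetric positive definite input matrix Σ̂). -/

import Mathlib

open Finset

/-- The principal submatrix of `V` indexed by the finite set `S`. -/
noncomputable def subCov {p : ℕ} (V : Matrix (Fin p) (Fin p) ℝ) (S : Finset (Fin p)) :
    Matrix S S ℝ := Matrix.of fun a b => V a.1 b.1

/-- The conditional covariance of coordinates `i` and `j` given the coordinates in `S`
(Schur complement formula). -/
noncomputable def condCov {p : ℕ} (V : Matrix (Fin p) (Fin p) ℝ) (S : Finset (Fin p))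
    (i j : Fin p) : ℝ :=
  V i j - ∑ a : S, ∑ b : S, V i a.1 * (subCov V S)⁻¹ a b * V b.1 j

/-- The partial correlation between coordinates `i` and `j` given the coordinates in `S`. -/
noncomputable def parcor {p : ℕ} (V : Matrix (Fin p) (Fin p) ℝ) (S : Finset (Fin p))
    (i j : Fin p) : ℝ :=
  condCov V S i j / Real.sqrt (condCov V S i i * condCov V S j j)

/-- A directed acyclic graph on `Fin p` with decidable (Boolean) edges. -/
structure FinDAG (p : ℕ) where
  E : Fin p → Fin p → Bool
  acyclic : ∀ i, ¬ Relation.TransGen (fun a b => E a b = true) i i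

namespace FinDAG

variable {p : ℕ}

/-- The parents of `k`. -/
def pa (H : FinDAG p) (k : Fin p) : Finset (Fin p) := univ.filter fun i => H.E i k

/-- The number of edges of `H`. -/
def edgeCount (H : FinDAG p) : ℕ := (univ.filter fun q : Fin p × Fin p => H.E q.1 q.2).card

/-- `j` is a descendant of `i` (each node is a descendant of itself). -/
def desc (H : FinDAG p) (i j : Fin p) : Prop :=
  Relation.ReflTransGen (fun a b => H.E a b = true) i j

end FinDAG

/-- The rank-correlation-based score of a list of single-edge additions `L` (in order),
starting from the empty graph: when the edge `i → k` is added and the previously added edges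
give `k` the parent set `P`, the increment is `(1/2)·log(1 − r̂²_{ik|P}) + λ`, with the partial
correlations `r̂` computed from the (rank-correlation estimate) matrix `Sig` by the standard
matrix-inversion formula. -/
noncomputable def scoreAlong {p : ℕ} (Sig : Matrix (Fin p) (Fin p) ℝ) (lam : ℝ)
    (L : List (Fin p × Fin p)) : ℝ :=
  ∑ m : Fin L.length,
    ((1 : ℝ) / 2) * Real.log (1 - parcor Sig
        ((((L.take m.1).filter (fun e' => e'.2 = (L.get m).2)).map Prod.fst).toFinset)
        (L.get m).1 (L.get m).2 ^ 2) + lam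

/-- Adjacency in a `FinDAG`. -/
def FinDAG.adj {p : ℕ} (H : FinDAG p) (i j : Fin p) : Prop :=
  H.E i j = true ∨ H.E j i = true

/-- A v-structure `i → j ← k` (with `i`, `k` non-adjacent) in a `FinDAG`. -/
def FinDAG.vstruct {p : ℕ} (H : FinDAG p) (i j k : Fin p) : Prop :=
  H.E i j = true ∧ H.E k j = true ∧ ¬ H.adj i k ∧ i ≠ k

open Matrix

section Matrices

variable {p : ℕ} {Sig : Matrix (Fin p) (Fin p) ℝ}

lemma sig_symm (hsym : Sig.IsSymm) (i j : Fin p) : Sig i j = Sig j i := by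
  conv_lhs => rw [← hsym]
  rfl

lemma subCov_posDef (hpos : Sig.PosDef) (S : Finset (Fin p)) : (subCov Sig S).PosDef := by
  refine Matrix.PosDef.of_dotProduct_mulVec_pos ?_ ?_
  · ext a b
    simp only [Matrix.conjTranspose_apply, subCov, Matrix.of_apply, star_trivial]
    exact (hpos.isHermitian.apply b.1 a.1) |>.symm ▸ rfl
  · intro x hx
    classical
    set y : Fin p → ℝ := fun a => if h : a ∈ S then x ⟨a, h⟩ else 0 with hy
    have hyne : y ≠ 0 := by
      intro h0
      apply hx
      funext a
      have := congrFun h0 a.1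
      simpa [hy, a.2] using this
    have := hpos.dotProduct_mulVec_pos hyne
    have hform : star y ⬝ᵥ Sig *ᵥ y = star x ⬝ᵥ (subCov Sig S) *ᵥ x := by
      have hyS : ∀ a : S, y a.1 = x a := fun a => by simp [hy, a.2]
      have inner : ∀ a : Fin p, (∑ b : Fin p, Sig a b * y b) = ∑ b ∈ S, Sig a b * y b := by
        intro a
        exact (Finset.sum_subset (Finset.subset_univ S)
          (by intro b _ hb; simp [hy, hb])).symm
      have lhs1 : star y ⬝ᵥ Sig *ᵥ y = ∑ a ∈ S, y a * ∑ b ∈ S, Sig a b * y b := by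
        simp only [dotProduct, Matrix.mulVec, star_trivial, Pi.star_apply]
        rw [← Finset.sum_subset (Finset.subset_univ S)
          (by intro a _ ha; simp [hy, ha])]
        exact Finset.sum_congr rfl fun a _ => by rw [inner]
      have rhs1 : star x ⬝ᵥ (subCov Sig S) *ᵥ x = ∑ a : S, x a * ∑ b : S, Sig a.1 b.1 * x b := by
        simp [dotProduct, Matrix.mulVec, subCov]
      rw [lhs1, rhs1, ← Finset.sum_coe_sort S (fun a => y a * ∑ b ∈ S, Sig a b * y b)]
      refine Finset.sum_congr rfl fun a _ => ?_
      rw [hyS a, ← Finset.sum_coe_sort S (fun b => Sig a.1 b * y b)]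
      exact congrArg _ (Finset.sum_congr rfl fun b _ => by rw [hyS b])
    rw [hform] at this
    exact this

lemma subCov_inv_mul (hpos : Sig.PosDef) (S : Finset (Fin p)) :
    (subCov Sig S)⁻¹ * subCov Sig S = 1 :=
  Matrix.nonsing_inv_mul _ (isUnit_iff_ne_zero.mpr (subCov_posDef hpos S).det_pos.ne')

lemma subCov_mul_inv (hpos : Sig.PosDef) (S : Finset (Fin p)) :
    subCov Sig S * (subCov Sig S)⁻¹ = 1 :=
  Matrix.mul_nonsing_inv _ (isUnit_iff_ne_zero.mpr (subCov_posDef hpos S).det_pos.ne')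

lemma subCov_inv_symm (hsym : Sig.IsSymm) (hpos : Sig.PosDef) (S : Finset (Fin p))
    (a b : S) : (subCov Sig S)⁻¹ a b = (subCov Sig S)⁻¹ b a := by
  have hT : (subCov Sig S)ᵀ = subCov Sig S := by
    ext a b
    simp only [Matrix.transpose_apply, subCov, Matrix.of_apply]
    exact sig_symm hsym _ _
  conv_lhs => rw [show (subCov Sig S)⁻¹ a b = ((subCov Sig S)⁻¹)ᵀ b a from rfl,
    Matrix.transpose_nonsing_inv, hT]


lemma exists_nrml (hpos : Sig.PosDef) (S : Finset (Fin p)) (k : Fin p) :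
    ∃ w : Fin p → ℝ, (∀ a, a ∉ S → w a = 0) ∧
      ∀ b ∈ S, ∑ a ∈ S, w a * Sig a b = Sig k b := by
  classical
  set w : Fin p → ℝ :=
    fun a => if h : a ∈ S then ∑ c : S, Sig k c.1 * (subCov Sig S)⁻¹ c ⟨a, h⟩ else 0 with hwdef
  refine ⟨w, fun a ha => by simp [hwdef, ha], ?_⟩
  intro b hb
  have hwa : ∀ a : S, w a.1 = ∑ c : S, Sig k c.1 * (subCov Sig S)⁻¹ c a := by
    intro a; simp [hwdef, a.2]
  rw [← Finset.sum_coe_sort S (fun a => w a * Sig a b)]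
  calc ∑ a : S, w a.1 * Sig a.1 b
      = ∑ a : S, ∑ c : S, Sig k c.1 * (subCov Sig S)⁻¹ c a * subCov Sig S a ⟨b, hb⟩ := by
        refine Finset.sum_congr rfl fun a _ => ?_
        rw [hwa a, Finset.sum_mul]
        rfl
    _ = ∑ c : S, Sig k c.1 * ((subCov Sig S)⁻¹ * subCov Sig S) c ⟨b, hb⟩ := by
        rw [Finset.sum_comm]
        refine Finset.sum_congr rfl fun c _ => ?_
        rw [Matrix.mul_apply, Finset.mul_sum]
        exact Finset.sum_congr rfl fun a _ => by ring
    _ = Sig k b := by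
        rw [subCov_inv_mul hpos]
        simp [Matrix.one_apply]

lemma condCov_eq (hpos : Sig.PosDef) (S : Finset (Fin p)) (k j : Fin p) (w : Fin p → ℝ)
    (hw : ∀ b ∈ S, ∑ a ∈ S, w a * Sig a b = Sig k b) :
    condCov Sig S k j = Sig k j - ∑ a ∈ S, w a * Sig a j := by
  classical
  set A := subCov Sig S with hA
  set W : S → ℝ := fun b => ∑ a : S, Sig k a.1 * A⁻¹ a b with hW
  have hWb : ∀ b : S, ∑ a : S, W a * A a b = Sig k b.1 := by
    intro b
    calc ∑ a : S, W a * A a b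
        = ∑ a : S, ∑ c : S, Sig k c.1 * A⁻¹ c a * A a b := by
          refine Finset.sum_congr rfl fun a _ => ?_
          rw [hW, Finset.sum_mul]
      _ = ∑ c : S, Sig k c.1 * (A⁻¹ * A) c b := by
          rw [Finset.sum_comm]
          refine Finset.sum_congr rfl fun c _ => ?_
          rw [Matrix.mul_apply, Finset.mul_sum]
          exact Finset.sum_congr rfl fun a _ => by ring
      _ = Sig k b.1 := by rw [hA, subCov_inv_mul hpos]; simp [Matrix.one_apply]
  have hwb : ∀ b : S, ∑ a : S, w a.1 * A a b = Sig k b.1 := by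
    intro b
    have := hw b.1 b.2
    rw [← Finset.sum_coe_sort S (fun a => w a * Sig a b.1)] at this
    exact this
  have hwW : ∀ b : S, w b.1 = W b := by
    set u : S → ℝ := fun b => w b.1 - W b with hu
    have hu0 : ∀ c : S, ∑ b : S, u b * A b c = 0 := by
      intro c
      simp only [hu, sub_mul, Finset.sum_sub_distrib, hwb, hWb, sub_self]
    simp only [Finset.univ_eq_attach] at hu0
    have huz : ∀ b : S, u b = 0 := by
      intro b
      calc u b = ∑ c : S, u c * (1 : Matrix S S ℝ) c b := by simp [Matrix.one_apply]
        _ = ∑ c : S, u c * (A * A⁻¹) c b := by rw [subCov_mul_inv hpos]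
        _ = ∑ c : S, ∑ d : S, u c * A c d * A⁻¹ d b := by
            refine Finset.sum_congr rfl fun c _ => ?_
            rw [Matrix.mul_apply, Finset.mul_sum]
            exact Finset.sum_congr rfl fun d _ => by ring
        _ = ∑ d : S, (∑ c : S, u c * A c d) * A⁻¹ d b := by
            rw [Finset.sum_comm]
            exact Finset.sum_congr rfl fun d _ => (Finset.sum_mul _ _ _).symm
        _ = 0 := by simp [hu0]
    intro b
    have := huz b
    simpa [hu, sub_eq_zero] using this
  show Sig k j - ∑ a : S, ∑ b : S, Sig k a.1 * A⁻¹ a b * Sig b.1 j = _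
  congr 1
  rw [← Finset.sum_coe_sort S (fun a => w a * Sig a j), Finset.sum_comm]
  refine Finset.sum_congr rfl fun b _ => ?_
  rw [← Finset.sum_mul]
  rw [show (∑ a : S, Sig k a.1 * A⁻¹ a b) = W b from rfl, ← hwW b]

lemma condCov_symm (hsym : Sig.IsSymm) (hpos : Sig.PosDef) (S : Finset (Fin p)) (i j : Fin p) :
    condCov Sig S i j = condCov Sig S j i := by
  unfold condCov
  rw [sig_symm hsym i j]
  congr 1
  rw [Finset.sum_comm]
  refine Finset.sum_congr rfl fun x _ => Finset.sum_congr rfl fun y _ => ?_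
  rw [subCov_inv_symm hsym hpos S y x, sig_symm hsym j x, sig_symm hsym y i]
  ring

lemma condCov_pos (hsym : Sig.IsSymm) (hpos : Sig.PosDef) (S : Finset (Fin p)) {k : Fin p}
    (hk : k ∉ S) : 0 < condCov Sig S k k := by
  classical
  obtain ⟨w, hw0, hw⟩ := exists_nrml hpos S k
  set x : Fin p → ℝ := fun a => (if a = k then 1 else 0) - w a with hxdef
  have hwk : w k = 0 := hw0 k hk
  have hx : x ≠ 0 := by
    intro h0
    have := congrFun h0 k
    simp [hxdef, hwk] at this
  have hq := hpos.dotProduct_mulVec_pos hx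
  set c : Fin p → ℝ := fun a => Sig a k - ∑ b ∈ S, w b * Sig b a with hcdef
  have hinner : ∀ a : Fin p, (Sig *ᵥ x) a = c a := by
    intro a
    simp only [Matrix.mulVec, dotProduct, hxdef, hcdef, mul_sub]
    rw [Finset.sum_sub_distrib]
    congr 1
    · simp
    · rw [← Finset.sum_subset (Finset.subset_univ S)
        (by intro b _ hb; simp [hw0 b hb])]
      exact Finset.sum_congr rfl fun b _ => by rw [sig_symm hsym a b]; ring
  have hcS : ∀ a ∈ S, c a = 0 := by
    intro a ha
    rw [hcdef]
    simp only
    rw [hw a ha, sig_symm hsym a k, sub_self]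
  have hform : star x ⬝ᵥ Sig *ᵥ x = condCov Sig S k k := by
    have : star x ⬝ᵥ Sig *ᵥ x = ∑ a : Fin p, x a * c a := by
      simp only [dotProduct, star_trivial, Pi.star_apply]
      exact Finset.sum_congr rfl fun a _ => by rw [hinner a]
    rw [this]
    have hsingle : ∑ a : Fin p, x a * c a = x k * c k := by
      refine Finset.sum_eq_single k ?_ (fun h => absurd (Finset.mem_univ k) h)
      intro a _ hak
      by_cases haS : a ∈ S
      · rw [hcS a haS, mul_zero]
      · simp [hxdef, hak, hw0 a haS]
    rw [hsingle]
    have hxk : x k = 1 := by simp [hxdef, hwk]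
    rw [hxk, one_mul, condCov_eq hpos S k k w hw]
  linarith [hform ▸ hq]

lemma condCov_insert (hsym : Sig.IsSymm) (hpos : Sig.PosDef) (S : Finset (Fin p))
    {i : Fin p} (k j : Fin p) (hi : i ∉ S) :
    condCov Sig (insert i S) k j
      = condCov Sig S k j - condCov Sig S i k * condCov Sig S i j / condCov Sig S i i := by
  classical
  obtain ⟨w, hw0, hw⟩ := exists_nrml hpos S k
  obtain ⟨u, hu0, hu⟩ := exists_nrml hpos S i
  have hii : 0 < condCov Sig S i i := condCov_pos hsym hpos S hi
  set β := condCov Sig S i k / condCov Sig S i i with hβ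
  set w' : Fin p → ℝ := fun a => if a = i then β else w a - β * u a with hw'def
  have hS : ∀ b, ∑ a ∈ S, w' a * Sig a b
      = (∑ a ∈ S, w a * Sig a b) - β * ∑ a ∈ S, u a * Sig a b := by
    intro b
    rw [Finset.mul_sum, ← Finset.sum_sub_distrib]
    refine Finset.sum_congr rfl fun a ha => ?_
    have : a ≠ i := fun h => hi (h ▸ ha)
    simp only [hw'def, if_neg this]
    ring
  have hNE : ∀ b ∈ insert i S, ∑ a ∈ insert i S, w' a * Sig a b = Sig k b := by
    intro b hb
    rw [Finset.sum_insert hi, hS b]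
    have hw'i : w' i = β := by simp [hw'def]
    rcases Finset.mem_insert.mp hb with hbi | hbS
    · subst hbi
      have e1 : ∑ a ∈ S, w a * Sig a b = Sig k b - condCov Sig S k b := by
        rw [condCov_eq hpos S k b w hw]; ring
      have e2 : ∑ a ∈ S, u a * Sig a b = Sig b b - condCov Sig S b b := by
        rw [condCov_eq hpos S b b u hu]; ring
      rw [hw'i, e1, e2]
      have hβc : β * condCov Sig S b b = condCov Sig S k b := by
        rw [hβ, div_mul_cancel₀ _ hii.ne', condCov_symm hsym hpos S b k]
      linarith
    · rw [hw'i, hw b hbS, hu b hbS]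
      ring
  rw [condCov_eq hpos (insert i S) k j w' hNE, Finset.sum_insert hi, hS j]
  have hw'i : w' i = β := by simp [hw'def]
  have e1 : ∑ a ∈ S, w a * Sig a j = Sig k j - condCov Sig S k j := by
    rw [condCov_eq hpos S k j w hw]; ring
  have e2 : ∑ a ∈ S, u a * Sig a j = Sig i j - condCov Sig S i j := by
    rw [condCov_eq hpos S i j u hu]; ring
  rw [hw'i, e1, e2, hβ]
  field_simp
  ring


lemma log_one_sub_parcor_sq (hsym : Sig.IsSymm) (hpos : Sig.PosDef) (S : Finset (Fin p))
    {i k : Fin p} (hi : i ∉ S) (hk : k ∉ S) (hik : i ≠ k) :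
    Real.log (1 - parcor Sig S i k ^ 2)
      = Real.log (condCov Sig (insert i S) k k) - Real.log (condCov Sig S k k) := by
  have hii := condCov_pos hsym hpos S hi
  have hkk := condCov_pos hsym hpos S hk
  have hk' : k ∉ insert i S := by simp [Finset.mem_insert, hik.symm, hk]
  have hins : 0 < condCov Sig (insert i S) k k := condCov_pos hsym hpos _ hk'
  have hrw := condCov_insert hsym hpos S k k hi
  have h1 : 1 - parcor Sig S i k ^ 2 = condCov Sig (insert i S) k k / condCov Sig S k k := by
    rw [parcor, div_pow, Real.sq_sqrt (mul_pos hii hkk).le, hrw]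
    field_simp
  rw [h1, Real.log_div hins.ne' hkk.ne']

lemma swap_log (hsym : Sig.IsSymm) (hpos : Sig.PosDef) (S : Finset (Fin p))
    {X Y : Fin p} (hX : X ∉ S) (hY : Y ∉ S) (hXY : X ≠ Y) :
    Real.log (condCov Sig S X X) + Real.log (condCov Sig (insert X S) Y Y)
      = Real.log (condCov Sig S Y Y) + Real.log (condCov Sig (insert Y S) X X) := by
  have hXX := condCov_pos hsym hpos S hX
  have hYY := condCov_pos hsym hpos S hY
  have hY' : Y ∉ insert X S := by simp [Finset.mem_insert, hXY.symm, hY]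
  have hX' : X ∉ insert Y S := by simp [Finset.mem_insert, hXY, hX]
  have h1 : 0 < condCov Sig (insert X S) Y Y := condCov_pos hsym hpos _ hY'
  have h2 : 0 < condCov Sig (insert Y S) X X := condCov_pos hsym hpos _ hX'
  rw [← Real.log_mul hXX.ne' h1.ne', ← Real.log_mul hYY.ne' h2.ne']
  congr 1
  rw [condCov_insert hsym hpos S Y Y hX, condCov_insert hsym hpos S X X hY,
    condCov_symm hsym hpos S Y X]
  field_simp

end Matrices

def paL {p : ℕ} (L : List (Fin p × Fin p)) (k : Fin p) : Finset (Fin p) :=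
  ((L.filter (fun e' => e'.2 = k)).map Prod.fst).toFinset

section PartB

variable {p : ℕ} {Sig : Matrix (Fin p) (Fin p) ℝ}

lemma mem_paL {L : List (Fin p × Fin p)} {k i : Fin p} :
    i ∈ paL L k ↔ (i, k) ∈ L := by
  simp only [paL, List.mem_toFinset, List.mem_map, List.mem_filter]
  constructor
  · rintro ⟨⟨a, b⟩, ⟨heL, he2⟩, he1⟩
    simp only [decide_eq_true_eq] at he2
    cases he1
    cases he2
    exact heL
  · intro h
    exact ⟨(i, k), ⟨h, by simp⟩, rfl⟩

lemma paL_append_self (L : List (Fin p × Fin p)) (i k : Fin p) :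
    paL (L ++ [(i, k)]) k = insert i (paL L k) := by
  ext a
  rw [Finset.mem_insert, mem_paL, mem_paL, List.mem_append, List.mem_singleton]
  constructor
  · rintro (h | h)
    · exact Or.inr h
    · exact Or.inl (congrArg Prod.fst h)
  · rintro (rfl | h)
    · exact Or.inr rfl
    · exact Or.inl h

lemma paL_append_ne (L : List (Fin p × Fin p)) (i k : Fin p) {j : Fin p} (hj : j ≠ k) :
    paL (L ++ [(i, k)]) j = paL L j := by
  ext a
  rw [mem_paL, mem_paL, List.mem_append, List.mem_singleton]
  constructor
  · rintro (h | h)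
    · exact h
    · exact absurd (congrArg Prod.snd h) hj
  · exact fun h => Or.inl h

lemma sum_univ_fin_cast {M : Type*} [AddCommMonoid M] {m n : ℕ} (h : m = n) (f : Fin m → M) :
    ∑ i : Fin m, f i = ∑ i : Fin n, f (Fin.cast h.symm i) := by
  subst h
  rfl

lemma scoreAlong_append (lam : ℝ) (L : List (Fin p × Fin p)) (e : Fin p × Fin p) :
    scoreAlong Sig lam (L ++ [e]) = scoreAlong Sig lam L +
      ((1 : ℝ) / 2) * Real.log (1 - parcor Sig (paL L e.2) e.1 e.2 ^ 2) := by
  have hlen : (L ++ [e]).length = L.length + 1 := by simp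
  unfold scoreAlong
  rw [sum_univ_fin_cast hlen, Fin.sum_univ_castSucc]
  have hlast : (((1 : ℝ) / 2) * Real.log (1 - parcor Sig
        (((((L ++ [e]).take ((Fin.cast hlen.symm (Fin.last L.length)) : Fin _).1).filter
            (fun e' => e'.2 = ((L ++ [e]).get (Fin.cast hlen.symm (Fin.last L.length))).2)).map
          Prod.fst).toFinset)
        ((L ++ [e]).get (Fin.cast hlen.symm (Fin.last L.length))).1
        ((L ++ [e]).get (Fin.cast hlen.symm (Fin.last L.length))).2 ^ 2))
      = ((1 : ℝ) / 2) * Real.log (1 - parcor Sig (paL L e.2) e.1 e.2 ^ 2) := by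
    have hm : ((Fin.cast hlen.symm) (Fin.last L.length)).1 = L.length := rfl
    have hget : ((L ++ [e]).get ((Fin.cast hlen.symm) (Fin.last L.length))) = e := by
      simp only [List.get_eq_getElem, hm]
      exact List.getElem_concat_length rfl _
    rw [hget, hm, List.take_left (l₁ := L) (l₂ := [e])]
    rfl
  rw [hlast]
  have hrest : ∀ m : Fin L.length, (((1 : ℝ) / 2) * Real.log (1 - parcor Sig
        (((((L ++ [e]).take ((Fin.cast hlen.symm m.castSucc : Fin _)).1).filter
            (fun e' => e'.2 = ((L ++ [e]).get (Fin.cast hlen.symm m.castSucc)).2)).map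
          Prod.fst).toFinset)
        ((L ++ [e]).get (Fin.cast hlen.symm m.castSucc)).1
        ((L ++ [e]).get (Fin.cast hlen.symm m.castSucc)).2 ^ 2))
      = ((1 : ℝ) / 2) * Real.log (1 - parcor Sig
        ((((L.take m.1).filter (fun e' => e'.2 = (L.get m).2)).map Prod.fst).toFinset)
        (L.get m).1 (L.get m).2 ^ 2) := by
    intro m
    have hm : ((Fin.cast hlen.symm) m.castSucc).1 = m.1 := rfl
    have hget : ((L ++ [e]).get ((Fin.cast hlen.symm) m.castSucc)) = L.get m := by
      simp only [List.get_eq_getElem, hm]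
      exact List.getElem_append_left m.2
    rw [hget, hm, List.take_append_of_le_length m.2.le]
  rw [Finset.sum_congr rfl fun m _ => hrest m]
  ring

lemma scoreAlong_eq_score (hsym : Sig.IsSymm) (hpos : Sig.PosDef) (lam : ℝ) :
    ∀ L : List (Fin p × Fin p), L.Nodup → (∀ e ∈ L, e.1 ≠ e.2) →
    scoreAlong Sig lam L =
      (∑ k : Fin p, ((1 : ℝ) / 2) *
        (Real.log (condCov Sig (paL L k) k k) - Real.log (Sig k k))) + lam := by
  intro L
  induction L using List.reverseRecOn with
  | nil =>
    intro _ _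
    have h0 : scoreAlong Sig lam ([] : List (Fin p × Fin p)) = lam := by
      simp [scoreAlong]
    rw [h0]
    have : ∀ k : Fin p, condCov Sig (paL ([] : List (Fin p × Fin p)) k) k k = Sig k k := by
      intro k
      have hp : paL ([] : List (Fin p × Fin p)) k = ∅ := by simp [paL]
      rw [hp]
      simp [condCov]
    simp [this]
  | append_singleton L e IH =>
    intro hnd hne
    have hndL : L.Nodup := (List.nodup_append'.mp hnd).1
    have heL : e ∉ L := fun hmem => (List.nodup_append'.mp hnd).2.2 hmem (by simp)
    have hneL : ∀ e' ∈ L, e'.1 ≠ e'.2 := fun e' h => hne e' (by simp [h])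
    obtain ⟨i, k⟩ := e
    have hik : i ≠ k := hne (i, k) (by simp)
    have hiP : i ∉ paL L k := fun h => heL (mem_paL.mp h)
    have hkP : k ∉ paL L k := fun h => (hneL (k, k) (mem_paL.mp h)) rfl
    rw [scoreAlong_append, IH hndL hneL]
    have hlog := log_one_sub_parcor_sq hsym hpos (paL L k) hiP hkP hik
    have hsub : ∑ j : Fin p,
        (((1 : ℝ) / 2) * (Real.log (condCov Sig (paL (L ++ [(i, k)]) j) j j)
            - Real.log (Sig j j))
          - ((1 : ℝ) / 2) * (Real.log (condCov Sig (paL L j) j j) - Real.log (Sig j j)))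
        = ((1 : ℝ) / 2) * (Real.log (condCov Sig (insert i (paL L k)) k k)
            - Real.log (condCov Sig (paL L k) k k)) := by
      rw [Finset.sum_eq_single k]
      · rw [paL_append_self]
        ring
      · intro j _ hj
        rw [paL_append_ne L i k hj]
        ring
      · exact fun h => absurd (Finset.mem_univ k) h
    rw [Finset.sum_sub_distrib] at hsub
    simp only [hlog]
    linarith [hsub]

end PartB

section Graphs

variable {p : ℕ}

lemma FinDAG.not_self (H : FinDAG p) (i : Fin p) : ¬ H.E i i = true :=
  fun h => H.acyclic i (Relation.TransGen.single h)

lemma FinDAG.no_two_cycle (H : FinDAG p) {i j : Fin p} (h1 : H.E i j = true)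
    (h2 : H.E j i = true) : False :=
  H.acyclic i (Relation.TransGen.head h1 (Relation.TransGen.single h2))

lemma FinDAG.mem_pa {H : FinDAG p} {i k : Fin p} : i ∈ H.pa k ↔ H.E i k = true := by
  simp [FinDAG.pa]

noncomputable def rank (H : FinDAG p) (i : Fin p) : ℕ :=
  (@Finset.filter _ (fun j => Relation.ReflTransGen (fun a b => H.E a b = true) j i)
    (Classical.decPred _) univ).card

lemma rank_lt (H : FinDAG p) {i j : Fin p} (h : H.E i j = true) : rank H i < rank H j := by
  classical
  apply Finset.card_lt_card
  constructor
  · intro a ha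
    rw [Finset.mem_filter] at ha ⊢
    exact ⟨Finset.mem_univ a, ha.2.tail h⟩
  · intro hsub
    have hj : j ∈ @Finset.filter _
        (fun b => Relation.ReflTransGen (fun a b => H.E a b = true) b j)
        (Classical.decPred _) univ := by
      rw [Finset.mem_filter]
      exact ⟨Finset.mem_univ j, Relation.ReflTransGen.refl⟩
    have hji := (Finset.mem_filter.mp (hsub hj)).2
    rcases Relation.reflTransGen_iff_eq_or_transGen.mp hji with heq | htr
    · exact H.not_self i (by rw [← heq] at h; exact h)
    · exact H.acyclic i (Relation.TransGen.head h htr)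

noncomputable def scoreOf {p : ℕ} (Sig : Matrix (Fin p) (Fin p) ℝ) (H : FinDAG p) : ℝ :=
  ∑ k : Fin p, ((1 : ℝ) / 2) *
    (Real.log (condCov Sig (H.pa k) k k) - Real.log (Sig k k))

lemma scoreAlong_eq_scoreOf {Sig : Matrix (Fin p) (Fin p) ℝ} (hsym : Sig.IsSymm)
    (hpos : Sig.PosDef) (lam : ℝ) (H : FinDAG p) (L : List (Fin p × Fin p))
    (hnod : L.Nodup) (hL : ∀ e : Fin p × Fin p, e ∈ L ↔ H.E e.1 e.2 = true) :
    scoreAlong Sig lam L = scoreOf Sig H + lam := by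
  have hself : ∀ e ∈ L, e.1 ≠ e.2 := by
    intro e he heq
    exact H.not_self e.2 (heq ▸ (hL e).mp he)
  rw [scoreAlong_eq_score hsym hpos lam L hnod hself]
  congr 1
  apply Finset.sum_congr rfl
  intro k _
  have : paL L k = H.pa k := by
    ext i
    rw [mem_paL, FinDAG.mem_pa]
    exact hL (i, k)
  rw [this]

/-- The edge function after reversing the edge `X → Y`. -/
def revE (H : FinDAG p) (X Y : Fin p) : Fin p → Fin p → Bool :=
  fun a b => if a = X ∧ b = Y then false else if a = Y ∧ b = X then true else H.E a b

lemma revE_true_iff (H : FinDAG p) (X Y : Fin p) (a b : Fin p) :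
    revE H X Y a b = true ↔
      (¬(a = X ∧ b = Y)) ∧ ((a = Y ∧ b = X) ∨ H.E a b = true) := by
  unfold revE
  split_ifs with h1 h2
  · simp [h1]
  · constructor
    · intro _
      exact ⟨h1, Or.inl h2⟩
    · intro _
      rfl
  · constructor
    · intro h
      exact ⟨h1, Or.inr h⟩
    · rintro ⟨_, hYX | hE⟩
      · exact absurd hYX h2
      · exact hE

lemma rev_acyclic (H : FinDAG p) {X Y : Fin p} (hXY : H.E X Y = true)
    (hcov : H.pa Y = insert X (H.pa X)) :
    ∀ i, ¬ Relation.TransGen (fun a b => revE H X Y a b = true) i i := by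
  have hXYne : X ≠ Y := fun h => H.not_self Y (h ▸ hXY)
  set E0 : Fin p → Fin p → Prop :=
    fun a b => H.E a b = true ∧ ¬(a = X ∧ b = Y) with hE0
  have hmono : ∀ a b, E0 a b → H.E a b = true := fun a b h => h.1
  have hdec : ∀ a b, Relation.TransGen (fun a b => revE H X Y a b = true) a b →
      Relation.TransGen E0 a b ∨
        (Relation.ReflTransGen E0 a Y ∧ Relation.ReflTransGen E0 X b) := by
    intro a b h
    induction h with
    | single hstep =>
      rcases (revE_true_iff H X Y _ _).mp hstep with ⟨hne, hYX | hE⟩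
      · exact Or.inr ⟨hYX.1 ▸ Relation.ReflTransGen.refl, hYX.2 ▸ Relation.ReflTransGen.refl⟩
      · exact Or.inl (Relation.TransGen.single ⟨hE, hne⟩)
    | tail hab hstep IH =>
      rcases (revE_true_iff H X Y _ _).mp hstep with ⟨hne, hYX | hE⟩
      · rcases IH with h1 | ⟨h1, _⟩
        · exact Or.inr ⟨hYX.1 ▸ h1.to_reflTransGen, hYX.2 ▸ Relation.ReflTransGen.refl⟩
        · exact Or.inr ⟨h1, hYX.2 ▸ Relation.ReflTransGen.refl⟩
      · rcases IH with h1 | ⟨h1, h2⟩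
        · exact Or.inl (h1.tail ⟨hE, hne⟩)
        · exact Or.inr ⟨h1, h2.tail ⟨hE, hne⟩⟩
  intro z hz
  rcases hdec z z hz with h | ⟨h1, h2⟩
  · exact H.acyclic z (Relation.TransGen.mono hmono _ _ h)
  · have hXYpath : Relation.ReflTransGen E0 X Y := h2.trans h1
    rcases Relation.reflTransGen_iff_eq_or_transGen.mp hXYpath with heq | htr
    · exact hXYne heq.symm
    · obtain ⟨W, hXW, hWY⟩ := Relation.TransGen.tail'_iff.mp htr
      have hWne : W ≠ X := fun h => hWY.2 ⟨h, rfl⟩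
      have hWpa : W ∈ H.pa Y := FinDAG.mem_pa.mpr hWY.1
      rw [hcov, Finset.mem_insert] at hWpa
      rcases hWpa with h | h
      · exact hWne h
      · exact H.acyclic X
          (Relation.TransGen.tail' (Relation.ReflTransGen.mono hmono _ _ hXW) (FinDAG.mem_pa.mp h))

noncomputable def revDAG (H : FinDAG p) (X Y : Fin p) (hXY : H.E X Y = true)
    (hcov : H.pa Y = insert X (H.pa X)) : FinDAG p :=
  ⟨revE H X Y, rev_acyclic H hXY hcov⟩

end Graphs

section Rev

variable {p : ℕ} (H : FinDAG p) {X Y : Fin p} (hXY : H.E X Y = true)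
  (hcov : H.pa Y = insert X (H.pa X))

include hXY

lemma pa_revDAG_Y : (revDAG H X Y hXY hcov).pa Y = H.pa X := by
  ext i
  rw [FinDAG.mem_pa, FinDAG.mem_pa]
  show revE H X Y i Y = true ↔ _
  rw [revE_true_iff]
  constructor
  · rintro ⟨hnXY, ⟨_, hYX⟩ | hE⟩
    · exact absurd hYX.symm (fun h => H.not_self Y (h ▸ hXY))
    · have : i ∈ H.pa Y := FinDAG.mem_pa.mpr hE
      rw [hcov, Finset.mem_insert] at this
      rcases this with rfl | h
      · exact absurd ⟨rfl, rfl⟩ hnXY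
      · exact FinDAG.mem_pa.mp h
  · intro hE
    have hiX : i ≠ X := fun h => H.not_self X (h ▸ hE)
    have hiY : H.E i Y = true := by
      have : i ∈ H.pa Y := by
        rw [hcov]
        exact Finset.mem_insert_of_mem (FinDAG.mem_pa.mpr hE)
      exact FinDAG.mem_pa.mp this
    exact ⟨fun hc => hiX hc.1, Or.inr hiY⟩

lemma pa_revDAG_X : (revDAG H X Y hXY hcov).pa X = insert Y (H.pa X) := by
  have hne : X ≠ Y := fun h => H.not_self Y (h ▸ hXY)
  ext i
  rw [FinDAG.mem_pa, Finset.mem_insert, FinDAG.mem_pa]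
  show revE H X Y i X = true ↔ _
  rw [revE_true_iff]
  constructor
  · rintro ⟨_, ⟨hiY, _⟩ | hE⟩
    · exact Or.inl hiY
    · exact Or.inr hE
  · rintro (rfl | hE)
    · exact ⟨fun hc => hne hc.2, Or.inl ⟨rfl, rfl⟩⟩
    · exact ⟨fun hc => hne hc.2, Or.inr hE⟩

lemma pa_revDAG_other {j : Fin p} (hjX : j ≠ X) (hjY : j ≠ Y) :
    (revDAG H X Y hXY hcov).pa j = H.pa j := by
  ext i
  rw [FinDAG.mem_pa, FinDAG.mem_pa]
  show revE H X Y i j = true ↔ _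
  rw [revE_true_iff]
  constructor
  · rintro ⟨_, ⟨_, hjX'⟩ | hE⟩
    · exact absurd hjX' hjX
    · exact hE
  · intro hE
    exact ⟨fun hc => hjY hc.2, Or.inr hE⟩

lemma adj_revDAG (i j : Fin p) : (revDAG H X Y hXY hcov).adj i j ↔ H.adj i j := by
  have hne : X ≠ Y := fun h => H.not_self Y (h ▸ hXY)
  have key : ∀ a b : Fin p, H.E a b = true → (revDAG H X Y hXY hcov).adj a b := by
    intro a b hE
    by_cases hab : a = X ∧ b = Y
    · right
      show revE H X Y b a = true
      rw [revE_true_iff]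
      refine ⟨?_, Or.inl ⟨hab.2, hab.1⟩⟩
      rintro ⟨_, haY⟩
      exact hne (hab.1.symm.trans haY)
    · left
      show revE H X Y a b = true
      rw [revE_true_iff]
      exact ⟨hab, Or.inr hE⟩
  constructor
  · rintro (h | h)
    · rcases (revE_true_iff H X Y i j).mp h with ⟨_, ⟨rfl, rfl⟩ | hE⟩
      · exact Or.inr hXY
      · exact Or.inl hE
    · rcases (revE_true_iff H X Y j i).mp h with ⟨_, ⟨rfl, rfl⟩ | hE⟩
      · exact Or.inl hXY
      · exact Or.inr hE
  · rintro (h | h)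
    · exact key i j h
    · rcases key j i h with h' | h'
      · exact Or.inr h'
      · exact Or.inl h'

end Rev

section Rev2

variable {p : ℕ} (H : FinDAG p) {X Y : Fin p} (hXY : H.E X Y = true)
  (hcov : H.pa Y = insert X (H.pa X))

include hXY

lemma vstruct_revDAG (i j k : Fin p) :
    (revDAG H X Y hXY hcov).vstruct i j k ↔ H.vstruct i j k := by
  have hsub : ∀ a, H.E a X = true → H.E a Y = true := fun a h => FinDAG.mem_pa.mp (by
    rw [hcov]
    exact Finset.mem_insert_of_mem (FinDAG.mem_pa.mpr h))
  constructor
  · rintro ⟨h1, h2, h3, h4⟩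
    have h3' : ¬ H.adj i k := fun hc => h3 ((adj_revDAG H hXY hcov i k).mpr hc)
    by_cases hjY : j = Y
    · subst hjY
      have hi : i ∈ H.pa X := by
        rw [← pa_revDAG_Y H hXY hcov]; exact FinDAG.mem_pa.mpr h1
      have hk : k ∈ H.pa X := by
        rw [← pa_revDAG_Y H hXY hcov]; exact FinDAG.mem_pa.mpr h2
      exact ⟨hsub i (FinDAG.mem_pa.mp hi), hsub k (FinDAG.mem_pa.mp hk), h3', h4⟩
    · by_cases hjX : j = X
      · rw [hjX] at h1 h2 ⊢
        have hi : i ∈ insert Y (H.pa X) := by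
          rw [← pa_revDAG_X H hXY hcov]; exact FinDAG.mem_pa.mpr h1
        have hk : k ∈ insert Y (H.pa X) := by
          rw [← pa_revDAG_X H hXY hcov]; exact FinDAG.mem_pa.mpr h2
        rcases Finset.mem_insert.mp hi with rfl | hi'
        · rcases Finset.mem_insert.mp hk with rfl | hk'
          · exact absurd rfl h4
          · exact absurd (Or.inr (hsub k (FinDAG.mem_pa.mp hk'))) h3'
        · rcases Finset.mem_insert.mp hk with rfl | hk'
          · exact absurd (Or.inl (hsub i (FinDAG.mem_pa.mp hi'))) h3'
          · exact ⟨FinDAG.mem_pa.mp hi', FinDAG.mem_pa.mp hk', h3', h4⟩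
      · have hi : i ∈ H.pa j := by
          rw [← pa_revDAG_other H hXY hcov hjX hjY]; exact FinDAG.mem_pa.mpr h1
        have hk : k ∈ H.pa j := by
          rw [← pa_revDAG_other H hXY hcov hjX hjY]; exact FinDAG.mem_pa.mpr h2
        exact ⟨FinDAG.mem_pa.mp hi, FinDAG.mem_pa.mp hk, h3', h4⟩
  · rintro ⟨h1, h2, h3, h4⟩
    have h3' : ¬ (revDAG H X Y hXY hcov).adj i k :=
      fun hc => h3 ((adj_revDAG H hXY hcov i k).mp hc)
    by_cases hjY : j = Y
    · subst hjY
      have hi : i ∈ insert X (H.pa X) := by rw [← hcov]; exact FinDAG.mem_pa.mpr h1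
      have hk : k ∈ insert X (H.pa X) := by rw [← hcov]; exact FinDAG.mem_pa.mpr h2
      rcases Finset.mem_insert.mp hi with rfl | hi'
      · rcases Finset.mem_insert.mp hk with rfl | hk'
        · exact absurd rfl h4
        · exact absurd (Or.inr (FinDAG.mem_pa.mp hk')) h3
      · rcases Finset.mem_insert.mp hk with rfl | hk'
        · exact absurd (Or.inl (FinDAG.mem_pa.mp hi')) h3
        · refine ⟨?_, ?_, h3', h4⟩
          · exact FinDAG.mem_pa.mp (by rw [pa_revDAG_Y H hXY hcov]; exact hi')
          · exact FinDAG.mem_pa.mp (by rw [pa_revDAG_Y H hXY hcov]; exact hk')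
    · by_cases hjX : j = X
      · rw [hjX] at h1 h2 ⊢
        refine ⟨?_, ?_, h3', h4⟩
        · exact FinDAG.mem_pa.mp (by
            rw [pa_revDAG_X H hXY hcov]
            exact Finset.mem_insert_of_mem (FinDAG.mem_pa.mpr h1))
        · exact FinDAG.mem_pa.mp (by
            rw [pa_revDAG_X H hXY hcov]
            exact Finset.mem_insert_of_mem (FinDAG.mem_pa.mpr h2))
      · refine ⟨?_, ?_, h3', h4⟩
        · exact FinDAG.mem_pa.mp (by
            rw [pa_revDAG_other H hXY hcov hjX hjY]; exact FinDAG.mem_pa.mpr h1)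
        · exact FinDAG.mem_pa.mp (by
            rw [pa_revDAG_other H hXY hcov hjX hjY]; exact FinDAG.mem_pa.mpr h2)

lemma scoreOf_revDAG {Sig : Matrix (Fin p) (Fin p) ℝ} (hsym : Sig.IsSymm)
    (hpos : Sig.PosDef) : scoreOf Sig (revDAG H X Y hXY hcov) = scoreOf Sig H := by
  have hne : X ≠ Y := fun h => H.not_self Y (h ▸ hXY)
  have hXP : X ∉ H.pa X := fun h => H.not_self X (FinDAG.mem_pa.mp h)
  have hYP : Y ∉ H.pa X := fun h => H.no_two_cycle hXY (FinDAG.mem_pa.mp h)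
  have hswap := swap_log hsym hpos (H.pa X) hXP hYP hne
  unfold scoreOf
  rw [← sub_eq_zero, ← Finset.sum_sub_distrib]
  have hzero : ∀ k ∈ (univ : Finset (Fin p)), k ∉ ({X, Y} : Finset (Fin p)) →
      (((1 : ℝ) / 2) * (Real.log (condCov Sig ((revDAG H X Y hXY hcov).pa k) k k)
          - Real.log (Sig k k))
        - ((1 : ℝ) / 2) * (Real.log (condCov Sig (H.pa k) k k) - Real.log (Sig k k))) = 0 := by
    intro k _ hk
    rw [Finset.mem_insert, Finset.mem_singleton] at hk
    push_neg at hk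
    rw [pa_revDAG_other H hXY hcov hk.1 hk.2]
    ring
  rw [← Finset.sum_subset (Finset.subset_univ ({X, Y} : Finset (Fin p))) hzero,
    Finset.sum_pair hne, pa_revDAG_X H hXY hcov, pa_revDAG_Y H hXY hcov, hcov]
  linarith [hswap]

end Rev2

section Chickering

variable {p : ℕ}

lemma chickering (H₁ H₂ : FinDAG p)
    (hskel : ∀ i j : Fin p, H₁.adj i j ↔ H₂.adj i j)
    (hvs : ∀ i j k : Fin p, H₁.vstruct i j k ↔ H₂.vstruct i j k)
    (hne : ∃ q : Fin p × Fin p, H₁.E q.1 q.2 = true ∧ H₂.E q.2 q.1 = true) :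
    ∃ X Y, H₁.E X Y = true ∧ H₂.E Y X = true ∧ H₁.pa Y = insert X (H₁.pa X) := by
  classical
  set D : Finset (Fin p) :=
    univ.filter (fun b => ∃ a, H₁.E a b = true ∧ H₂.E b a = true) with hD
  obtain ⟨q, hq1, hq2⟩ := hne
  have hDne : D.Nonempty :=
    ⟨q.2, by rw [hD, Finset.mem_filter]; exact ⟨Finset.mem_univ _, ⟨q.1, hq1, hq2⟩⟩⟩
  obtain ⟨Y, hYD, hYmin⟩ := Finset.exists_min_image D (rank H₁) hDne
  have hYD' := (Finset.mem_filter.mp hYD).2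
  set PS : Finset (Fin p) :=
    univ.filter (fun a => H₁.E a Y = true ∧ H₂.E Y a = true) with hPS
  have hPSne : PS.Nonempty := by
    obtain ⟨a, ha⟩ := hYD'
    exact ⟨a, by rw [hPS, Finset.mem_filter]; exact ⟨Finset.mem_univ _, ha⟩⟩
  obtain ⟨X, hXPS, hXmax⟩ := Finset.exists_max_image PS (rank H₁) hPSne
  obtain ⟨hXY1, hYX2⟩ := (Finset.mem_filter.mp hXPS).2
  refine ⟨X, Y, hXY1, hYX2, ?_⟩
  ext Z
  rw [Finset.mem_insert, FinDAG.mem_pa, FinDAG.mem_pa]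
  constructor
  · intro hZY
    by_cases hZX : Z = X
    · exact Or.inl hZX
    right
    by_cases hadj : H₁.adj Z X
    · rcases hadj with h | h
      · exact h
      · exfalso
        by_cases hYZ2 : H₂.E Y Z = true
        · have hZPS : Z ∈ PS := by
            rw [hPS, Finset.mem_filter]
            exact ⟨Finset.mem_univ _, hZY, hYZ2⟩
          exact absurd (rank_lt H₁ h) (not_lt.mpr (hXmax Z hZPS))
        · have hZY2 : H₂.E Z Y = true := by
            rcases (hskel Z Y).mp (Or.inl hZY) with h' | h'
            · exact h'
            · exact absurd h' hYZ2
          rcases (hskel X Z).mp (Or.inl h) with h' | h'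
          · exact H₂.acyclic Y (Relation.TransGen.head hYX2
              (Relation.TransGen.head h' (Relation.TransGen.single hZY2)))
          · have hZD : Z ∈ D := by
              rw [hD, Finset.mem_filter]
              exact ⟨Finset.mem_univ _, ⟨X, h, h'⟩⟩
            exact absurd (rank_lt H₁ hZY) (not_lt.mpr (hYmin Z hZD))
    · exfalso
      have hv1 : H₁.vstruct Z Y X := ⟨hZY, hXY1, hadj, hZX⟩
      have hv2 := (hvs Z Y X).mp hv1
      exact H₂.no_two_cycle hv2.2.1 hYX2
  · rintro (rfl | hZX)
    · exact hXY1
    · have hZYne : Z ≠ Y := by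
        intro h
        rw [h] at hZX
        exact H₁.no_two_cycle hXY1 hZX
      by_cases hadj : H₁.adj Z Y
      · rcases hadj with h | h
        · exact h
        · exact (H₁.acyclic Y (Relation.TransGen.head h
            (Relation.TransGen.head hZX (Relation.TransGen.single hXY1)))).elim
      · exfalso
        by_cases hZX2 : H₂.E Z X = true
        · have hnadj2 : ¬ H₂.adj Z Y := fun hc => hadj ((hskel Z Y).mpr hc)
          have hv2 : H₂.vstruct Z X Y := ⟨hZX2, hYX2, hnadj2, hZYne⟩
          have hv1 := (hvs Z X Y).mpr hv2
          exact H₁.no_two_cycle hXY1 hv1.2.1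
        · have hXZ2 : H₂.E X Z = true := by
            rcases (hskel Z X).mp (Or.inl hZX) with h' | h'
            · exact absurd h' hZX2
            · exact h'
          have hXD : X ∈ D := by
            rw [hD, Finset.mem_filter]
            exact ⟨Finset.mem_univ _, ⟨Z, hZX, hXZ2⟩⟩
          exact absurd (rank_lt H₁ hXY1) (not_lt.mpr (hYmin X hXD))

end Chickering

section Main

variable {p : ℕ}

def diffCard (H₁ H₂ : FinDAG p) : ℕ :=
  (univ.filter (fun q : Fin p × Fin p => H₁.E q.1 q.2 = true ∧ H₂.E q.2 q.1 = true)).card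

lemma scoreOf_eq_of_markov (Sig : Matrix (Fin p) (Fin p) ℝ) (hsym : Sig.IsSymm)
    (hpos : Sig.PosDef) :
    ∀ n (H₁ H₂ : FinDAG p), diffCard H₁ H₂ = n →
      (∀ i j : Fin p, H₁.adj i j ↔ H₂.adj i j) →
      (∀ i j k : Fin p, H₁.vstruct i j k ↔ H₂.vstruct i j k) →
      scoreOf Sig H₁ = scoreOf Sig H₂ := by
  intro n
  induction n using Nat.strong_induction_on with
  | _ n IH =>
    intro H₁ H₂ hcard hskel hvs
    rcases Nat.eq_zero_or_pos n with rfl | hposn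
    · have hzero : ∀ a b : Fin p, ¬(H₁.E a b = true ∧ H₂.E b a = true) := by
        intro a b hab
        have hmem : (a, b) ∈ univ.filter
            (fun q : Fin p × Fin p => H₁.E q.1 q.2 = true ∧ H₂.E q.2 q.1 = true) := by
          rw [Finset.mem_filter]
          exact ⟨Finset.mem_univ _, hab⟩
        have hemp := Finset.card_eq_zero.mp hcard
        rw [hemp] at hmem
        exact absurd hmem (Finset.notMem_empty _)
      have hE : ∀ a b : Fin p, H₁.E a b = H₂.E a b := by
        intro a b
        by_cases h1 : H₁.E a b = true
        · have h2 : H₂.E a b = true := by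
            rcases (hskel a b).mp (Or.inl h1) with h | h
            · exact h
            · exact absurd ⟨h1, h⟩ (hzero a b)
          rw [h1, h2]
        · by_cases h2 : H₂.E a b = true
          · rcases (hskel a b).mpr (Or.inl h2) with h | h
            · exact absurd h h1
            · exact absurd ⟨h, h2⟩ (hzero b a)
          · rw [Bool.not_eq_true] at h1 h2
            rw [h1, h2]
      unfold scoreOf
      refine Finset.sum_congr rfl fun k _ => ?_
      have hpa : H₁.pa k = H₂.pa k := by
        ext i
        rw [FinDAG.mem_pa, FinDAG.mem_pa, hE i k]
      rw [hpa]
    · have hne : ∃ q : Fin p × Fin p, H₁.E q.1 q.2 = true ∧ H₂.E q.2 q.1 = true := by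
        have hpos2 : 0 < diffCard H₁ H₂ := hcard ▸ hposn
        obtain ⟨q, hq⟩ := Finset.card_pos.mp hpos2
        exact ⟨q, (Finset.mem_filter.mp hq).2⟩
      obtain ⟨X, Y, hXY1, hYX2, hcov⟩ := chickering H₁ H₂ hskel hvs hne
      set H₁' := revDAG H₁ X Y hXY1 hcov with hH
      have hskel' : ∀ i j : Fin p, H₁'.adj i j ↔ H₂.adj i j :=
        fun i j => (adj_revDAG H₁ hXY1 hcov i j).trans (hskel i j)
      have hvs' : ∀ i j k : Fin p, H₁'.vstruct i j k ↔ H₂.vstruct i j k :=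
        fun i j k => (vstruct_revDAG H₁ hXY1 hcov i j k).trans (hvs i j k)
      have hfil : (univ.filter
            (fun q : Fin p × Fin p => H₁'.E q.1 q.2 = true ∧ H₂.E q.2 q.1 = true))
          = (univ.filter
            (fun q : Fin p × Fin p => H₁.E q.1 q.2 = true ∧ H₂.E q.2 q.1 = true)).erase
              (X, Y) := by
        ext q
        obtain ⟨a, b⟩ := q
        rw [Finset.mem_erase, Finset.mem_filter, Finset.mem_filter]
        simp only [Finset.mem_univ, true_and]
        constructor
        · rintro ⟨h1, h2⟩
          rcases (revE_true_iff H₁ X Y a b).mp h1 with ⟨hne', hYX | hEab⟩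
          · exfalso
            rw [hYX.1, hYX.2] at h2
            exact H₂.no_two_cycle h2 hYX2
          · refine ⟨?_, hEab, h2⟩
            intro hq
            exact hne' ⟨congrArg Prod.fst hq, congrArg Prod.snd hq⟩
        · rintro ⟨hq, h1, h2⟩
          have hne' : ¬(a = X ∧ b = Y) := fun hc => hq (Prod.ext hc.1 hc.2)
          exact ⟨(revE_true_iff H₁ X Y a b).mpr ⟨hne', Or.inr h1⟩, h2⟩
      have hmem : (X, Y) ∈ univ.filter
          (fun q : Fin p × Fin p => H₁.E q.1 q.2 = true ∧ H₂.E q.2 q.1 = true) := by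
        rw [Finset.mem_filter]
        exact ⟨Finset.mem_univ _, hXY1, hYX2⟩
      have hlt : diffCard H₁' H₂ < n := by
        unfold diffCard
        rw [hfil, Finset.card_erase_of_mem hmem]
        have : (univ.filter
            (fun q : Fin p × Fin p => H₁.E q.1 q.2 = true ∧ H₂.E q.2 q.1 = true)).card
              = n := hcard
        omega
      calc scoreOf Sig H₁ = scoreOf Sig H₁' := (scoreOf_revDAG H₁ hXY1 hcov hsym hpos).symm
        _ = scoreOf Sig H₂ := IH _ hlt H₁' H₂ rfl hskel' hvs'


/-- **Score equivalence of the rank-correlation-based score (Lemma 8).** For any symmetric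
positive definite input matrix `Sig`, two Markov equivalent DAGs (same skeleton and same
v-structures) receive the same score, each computed along an arbitrary order of single-edge
additions from the empty graph. -/
theorem scoreAlong_score_equivalent {p : ℕ} (Sig : Matrix (Fin p) (Fin p) ℝ)
    (hsym : Sig.IsSymm) (hpos : Sig.PosDef) (lam : ℝ) (H₁ H₂ : FinDAG p)
    (hskel : ∀ i j : Fin p, H₁.adj i j ↔ H₂.adj i j)
    (hvs : ∀ i j k : Fin p, H₁.vstruct i j k ↔ H₂.vstruct i j k)
    (L₁ L₂ : List (Fin p × Fin p)) (h₁ : L₁.Nodup) (h₂ : L₂.Nodup)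
    (hL₁ : ∀ e : Fin p × Fin p, e ∈ L₁ ↔ H₁.E e.1 e.2 = true)
    (hL₂ : ∀ e : Fin p × Fin p, e ∈ L₂ ↔ H₂.E e.1 e.2 = true) :
    scoreAlong Sig lam L₁ = scoreAlong Sig lam L₂ := by

  rw [scoreAlong_eq_scoreOf hsym hpos lam H₁ L₁ h₁ hL₁,
    scoreAlong_eq_scoreOf hsym hpos lam H₂ L₂ h₂ hL₂,
    scoreOf_eq_of_markov Sig hsym hpos (diffCard H₁ H₂) H₁ H₂ rfl hskel hvs]
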